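/- arXiv:2502.19936 — 8 statements merged into one kernel-verified Lean document; each statement's English description precedes it below -/
import Mathlib

section
/- Let M be a set with |M| ≥ 3 equipped with three metrics d₁, d₂, d₃ such that (M, d₁) is complete. Let φ: ℝ⁺ → ℝ⁺ be nondecreasing with ∑_{n≥1} φⁿ(s) < ∞ for all s > 0. Let F: M → M satisfy: (i) for all u ∈ M, if Fu ≠ u then F(Fu) ≠ u; (ii) F is continuous on (M, d₁); (iii) d₁(Fx,Fy) + d₂(Fy,Fz) + d₃(Fz,Fx) ≤ φ(d₁(x,y) + d₂(y,z) + d₃(z,x)) for all pairwise distinct x, y, z ∈ M. Then F has at least one fixed point. -/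
theorem stmt_4 {M : Type*} [MetricSpace M] [CompleteSpace M]
    (hM : ∃ a b c : M, a ≠ b ∧ b ≠ c ∧ c ≠ a)
    (d₂ d₃ : M → M → ℝ)
    (hd₂eq : ∀ x y, d₂ x y = 0 ↔ x = y)
    (hd₂symm : ∀ x y, d₂ x y = d₂ y x)
    (hd₂tri : ∀ x y z, d₂ x z ≤ d₂ x y + d₂ y z)
    (hd₃eq : ∀ x y, d₃ x y = 0 ↔ x = y)
    (hd₃symm : ∀ x y, d₃ x y = d₃ y x)
    (hd₃tri : ∀ x y z, d₃ x z ≤ d₃ x y + d₃ y z)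
    (φ : ℝ → ℝ)
    (hφpos : ∀ s, 0 ≤ s → 0 ≤ φ s)
    (hφmono : ∀ s t, 0 ≤ s → s ≤ t → φ s ≤ φ t)
    (hφsum : ∀ s, 0 < s → Summable (fun n : ℕ => φ^[n + 1] s))
    (F : M → M)
    (hi : ∀ u : M, F u ≠ u → F (F u) ≠ u)
    (hcont : Continuous F)
    (hcontr : ∀ x y z : M, x ≠ y → y ≠ z → z ≠ x →
      dist (F x) (F y) + d₂ (F y) (F z) + d₃ (F z) (F x) ≤
        φ (dist x y + d₂ y z + d₃ z x)) :
    ∃ u : M, F u = u := by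
  by_contra h
  push_neg at h
  obtain ⟨a, -, -, -⟩ := hM
  have hd₂nonneg : ∀ x y, 0 ≤ d₂ x y := by
    intro x y
    have h0 : d₂ x x = 0 := (hd₂eq x x).mpr rfl
    have := hd₂tri x y x
    rw [h0, hd₂symm y x] at this
    linarith
  have hd₃nonneg : ∀ x y, 0 ≤ d₃ x y := by
    intro x y
    have h0 : d₃ x x = 0 := (hd₃eq x x).mpr rfl
    have := hd₃tri x y x
    rw [h0, hd₃symm y x] at this
    linarith
  set f : ℕ → M := fun n => F^[n] a with hf
  have hstep : ∀ n, f (n + 1) = F (f n) := by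
    intro n; simp [hf, Function.iterate_succ_apply']
  have hne1 : ∀ n, f n ≠ f (n + 1) := by
    intro n heq
    exact h (f n) ((hstep n ▸ heq).symm)
  have hne2 : ∀ n, f n ≠ f (n + 2) := by
    intro n heq
    have h1 : F (f n) ≠ f n := fun hh => h (f n) hh
    have h2 := hi (f n) h1
    apply h2
    have : f (n + 2) = F (F (f n)) := by rw [hstep, hstep]
    rw [← this, ← heq]
  set s : ℕ → ℝ := fun n => dist (f n) (f (n + 1)) + d₂ (f (n + 1)) (f (n + 2)) + d₃ (f (n + 2)) (f n) with hs
  have hsnonneg : ∀ n, 0 ≤ s n := by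
    intro n
    have := dist_nonneg (x := f n) (y := f (n + 1))
    have := hd₂nonneg (f (n + 1)) (f (n + 2))
    have := hd₃nonneg (f (n + 2)) (f n)
    simp only [hs]; linarith
  have hspos : 0 < s 0 := by
    have h1 : 0 < dist (f 0) (f 1) := dist_pos.mpr (hne1 0)
    have := hd₂nonneg (f 1) (f 2)
    have := hd₃nonneg (f 2) (f 0)
    simp only [hs]; linarith
  have hrec : ∀ n, s (n + 1) ≤ φ (s n) := by
    intro n
    have := hcontr (f n) (f (n + 1)) (f (n + 2)) (hne1 n)
      (hne1 (n + 1)) (Ne.symm (hne2 n))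
    rw [← hstep n, ← hstep (n + 1), ← hstep (n + 2)] at this
    exact this
  have hφnn : ∀ n, 0 ≤ φ^[n] (s 0) := by
    intro n
    induction n with
    | zero => exact le_of_lt hspos
    | succ k ih => rw [Function.iterate_succ_apply']; exact hφpos _ ih
  have hbound : ∀ n, s n ≤ φ^[n] (s 0) := by
    intro n
    induction n with
    | zero => simp
    | succ k ih =>
      calc s (k + 1) ≤ φ (s k) := hrec k
        _ ≤ φ (φ^[k] (s 0)) := hφmono _ _ (hsnonneg k) ih
        _ = φ^[k + 1] (s 0) := (Function.iterate_succ_apply' φ k _).symm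
  have hdistle : ∀ n, dist (f n) (f (n + 1)) ≤ s n := by
    intro n
    have := hd₂nonneg (f (n + 1)) (f (n + 2))
    have := hd₃nonneg (f (n + 2)) (f n)
    simp only [hs]; linarith
  have hsum1 : Summable (fun n : ℕ => dist (f (n + 1)) (f (n + 1 + 1))) := by
    apply Summable.of_nonneg_of_le (fun n => dist_nonneg) (fun n => ?_) (hφsum (s 0) hspos)
    exact (hdistle (n + 1)).trans (hbound (n + 1))
  have hsum : Summable (fun n : ℕ => dist (f n) (f (n + 1))) :=
    (summable_nat_add_iff 1).mp hsum1
  have hcauchy : CauchySeq f := cauchySeq_of_summable_dist hsum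
  obtain ⟨u, hu⟩ := cauchySeq_tendsto_of_complete hcauchy
  have h1 : Filter.Tendsto (fun n => F (f n)) Filter.atTop (nhds (F u)) :=
    (hcont.tendsto u).comp hu
  have h2 : Filter.Tendsto (fun n => F (f n)) Filter.atTop (nhds u) := by
    have : (fun n => F (f n)) = fun n => f (n + 1) := by
      funext n; exact (hstep n).symm
    rw [this]
    exact hu.comp (Filter.tendsto_add_atTop_nat 1)
  exact h u (tendsto_nhds_unique h1 h2)
end

section
/- Let M be a set with |M| ≥ 3 equipped with three metrics d₁, d₂, d₃, and let φ: ℝ⁺ → ℝ⁺ be nondecreasing with ∑_{n≥1} φⁿ(s) < ∞ for all s > 0. If F: M → M satisfies d₁(Fx,Fy) + d₂(Fy,Fz) + d₃(Fz,Fx) ≤ φ(d₁(x,y) + d₂(y,z) + d₃(z,x)) for all pairwise distinct x, y, z ∈ M, then F has at most two fixed points. -/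
theorem stmt_5 {M : Type*} [MetricSpace M]
    (hM : ∃ a b c : M, a ≠ b ∧ b ≠ c ∧ c ≠ a)
    (d₂ d₃ : M → M → ℝ)
    (hd₂eq : ∀ x y, d₂ x y = 0 ↔ x = y)
    (hd₂symm : ∀ x y, d₂ x y = d₂ y x)
    (hd₂tri : ∀ x y z, d₂ x z ≤ d₂ x y + d₂ y z)
    (hd₃eq : ∀ x y, d₃ x y = 0 ↔ x = y)
    (hd₃symm : ∀ x y, d₃ x y = d₃ y x)
    (hd₃tri : ∀ x y z, d₃ x z ≤ d₃ x y + d₃ y z)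
    (φ : ℝ → ℝ)
    (hφpos : ∀ s, 0 ≤ s → 0 ≤ φ s)
    (hφmono : ∀ s t, 0 ≤ s → s ≤ t → φ s ≤ φ t)
    (hφsum : ∀ s, 0 < s → Summable (fun n : ℕ => φ^[n + 1] s))
    (F : M → M)
    (hcontr : ∀ x y z : M, x ≠ y → y ≠ z → z ≠ x →
      dist (F x) (F y) + d₂ (F y) (F z) + d₃ (F z) (F x) ≤
        φ (dist x y + d₂ y z + d₃ z x)) :
    ∀ x y z : M, F x = x → F y = y → F z = z → x = y ∨ y = z ∨ z = x := by
  intro x y z hx hy hz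
  by_contra h
  push_neg at h
  obtain ⟨hxy, hyz, hzx⟩ := h
  have hd₂nn : 0 ≤ d₂ y z := by
    have h0 : d₂ y y = 0 := (hd₂eq y y).2 rfl
    nlinarith [hd₂tri y z y, hd₂symm y z]
  have hd₃nn : 0 ≤ d₃ z x := by
    have h0 : d₃ z z = 0 := (hd₃eq z z).2 rfl
    nlinarith [hd₃tri z x z, hd₃symm z x]
  set s := dist x y + d₂ y z + d₃ z x with hs
  have hspos : 0 < s := by
    have := dist_pos.2 hxy
    positivity
  have hsφ : s ≤ φ s := by
    have := hcontr x y z hxy hyz (Ne.symm (Ne.symm hzx))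
    rw [hx, hy, hz] at this
    linarith
  have hiter : ∀ n : ℕ, s ≤ φ^[n + 1] s := by
    intro n
    induction n with
    | zero => simpa using hsφ
    | succ n ih =>
      have : φ s ≤ φ (φ^[n + 1] s) := hφmono _ _ hspos.le (ih)
      calc s ≤ φ s := hsφ
        _ ≤ φ (φ^[n + 1] s) := this
        _ = φ^[n + 2] s := (Function.iterate_succ_apply' φ (n + 1) s).symm
  have hsum := hφsum s hspos
  have htend := hsum.tendsto_atTop_zero
  have : s ≤ 0 := le_of_tendsto_of_tendsto tendsto_const_nhds htend
    (Filter.Eventually.of_forall hiter)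
  linarith
end

section
/- Let M be a set with |M| ≥ 3 equipped with three metrics d₁, d₂, d₃ such that max{d₂(u,v), d₃(u,v)} ≤ κ·d₁(u,v) for all u, v ∈ M and some constant κ > 0. Let φ: ℝ⁺ → ℝ⁺ be nondecreasing with φ(s) < s for all s > 0. If F: M → M satisfies d₁(Fx,Fy) + d₂(Fy,Fz) + d₃(Fz,Fx) ≤ φ(d₁(x,y) + d₂(y,z) + d₃(z,x)) for all pairwise distinct x, y, z ∈ M, then F is continuous as a map from (M, d₁) to (M, d₁). -/
theorem stmt_6 {M : Type*} [MetricSpace M]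
    (hM : ∃ a b c : M, a ≠ b ∧ b ≠ c ∧ c ≠ a)
    (d₂ d₃ : M → M → ℝ)
    (hd₂eq : ∀ x y, d₂ x y = 0 ↔ x = y)
    (hd₂symm : ∀ x y, d₂ x y = d₂ y x)
    (hd₂tri : ∀ x y z, d₂ x z ≤ d₂ x y + d₂ y z)
    (hd₃eq : ∀ x y, d₃ x y = 0 ↔ x = y)
    (hd₃symm : ∀ x y, d₃ x y = d₃ y x)
    (hd₃tri : ∀ x y z, d₃ x z ≤ d₃ x y + d₃ y z)
    (κ : ℝ) (hκ : 0 < κ)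
    (hdom : ∀ u v : M, max (d₂ u v) (d₃ u v) ≤ κ * dist u v)
    (φ : ℝ → ℝ)
    (hφpos : ∀ s, 0 ≤ s → 0 ≤ φ s)
    (hφmono : ∀ s t, 0 ≤ s → s ≤ t → φ s ≤ φ t)
    (hφlt : ∀ s, 0 < s → φ s < s)
    (F : M → M)
    (hcontr : ∀ x y z : M, x ≠ y → y ≠ z → z ≠ x →
      dist (F x) (F y) + d₂ (F y) (F z) + d₃ (F z) (F x) ≤
        φ (dist x y + d₂ y z + d₃ z x)) :
    Continuous F := by
  have hd₂nn : ∀ x y, 0 ≤ d₂ x y := by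
    intro x y
    have h := hd₂tri x y x
    rw [(hd₂eq x x).mpr rfl, hd₂symm y x] at h
    linarith
  have hd₃nn : ∀ x y, 0 ≤ d₃ x y := by
    intro x y
    have h := hd₃tri x y x
    rw [(hd₃eq x x).mpr rfl, hd₃symm y x] at h
    linarith
  rw [Metric.continuous_iff]
  intro p ε hε
  by_cases hiso : ∃ r > 0, ∀ z : M, dist z p < r → z = p
  · obtain ⟨r, hr, hiso⟩ := hiso
    exact ⟨r, hr, fun x hx => by rw [hiso x hx]; simpa using hε⟩
  · push_neg at hiso
    have hden : (0:ℝ) < 1 + 3 * κ := by linarith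
    set δ : ℝ := ε / (1 + 3 * κ) with hδ
    have hδpos : 0 < δ := div_pos hε hden
    refine ⟨δ, hδpos, fun x hx => ?_⟩
    by_cases hxp : x = p
    · subst hxp; simpa using hε
    · have hdxp : 0 < dist x p := dist_pos.mpr hxp
      obtain ⟨z, hz1, hz2⟩ := hiso (min δ (dist x p)) (lt_min hδpos hdxp)
      have hzdδ : dist z p < δ := lt_of_lt_of_le hz1 (min_le_left _ _)
      have hzdx : dist z p < dist x p := lt_of_lt_of_le hz1 (min_le_right _ _)
      have hzx : z ≠ x := by
        intro h; subst h; exact lt_irrefl _ hzdx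
      have key := hcontr x p z hxp (Ne.symm hz2) hzx
      have h2 : d₂ p z ≤ κ * dist p z := le_trans (le_max_left _ _) (hdom p z)
      have h3a : d₃ z x ≤ d₃ z p + d₃ p x := hd₃tri z p x
      have h3b : d₃ z p ≤ κ * dist z p := le_trans (le_max_right _ _) (hdom z p)
      have h3c : d₃ p x ≤ κ * dist p x := le_trans (le_max_right _ _) (hdom p x)
      set s : ℝ := dist x p + d₂ p z + d₃ z x with hs
      have hspos : 0 < s := by
        have := hd₂nn p z; have := hd₃nn z x; positivity
      have hslt : s < ε := by
        have hεeq : ε = (1 + 3 * κ) * δ := by rw [hδ]; field_simp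
        have hpz : dist p z = dist z p := dist_comm p z
        have hpx : dist p x = dist x p := dist_comm p x
        nlinarith [mul_pos hκ hδpos]
      have hφs : φ s < s := hφlt s hspos
      have hF : dist (F x) (F p) ≤ φ s := by
        have := hd₂nn (F p) (F z); have := hd₃nn (F z) (F x); linarith
      calc dist (F x) (F p) ≤ φ s := hF
        _ < s := hφs
        _ < ε := hslt
end

section
/- Let (M, d) be a complete metric space with |M| ≥ 3, let σ₂ and σ₃ be semimetrics on M (symmetric functions M × M → ℝ⁺ vanishing exactly on the diagonal), and let φ: ℝ⁺ → ℝ⁺ be nondecreasing with ∑_{n≥1} φⁿ(s) < ∞ for all s > 0. Let F: M → M satisfy: (i) if Fu ≠ u then F(Fu) ≠ u; (ii) F is continuous on (M, d); (iii) d(Fx,Fy) + σ₂(Fy,Fz) + σ₃(Fz,Fx) ≤ φ(d(x,y) + σ₂(y,z) + σ₃(z,x)) for all pairwise distinct x, y, z ∈ M. Then F has a fixed point and at most two fixed points. -/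
theorem stmt_7 {M : Type*} [MetricSpace M] [CompleteSpace M]
    (hM : ∃ a b c : M, a ≠ b ∧ b ≠ c ∧ c ≠ a)
    (σ₂ σ₃ : M → M → ℝ)
    (hσ₂pos : ∀ x y, 0 ≤ σ₂ x y)
    (hσ₂eq : ∀ x y, σ₂ x y = 0 ↔ x = y)
    (hσ₂symm : ∀ x y, σ₂ x y = σ₂ y x)
    (hσ₃pos : ∀ x y, 0 ≤ σ₃ x y)
    (hσ₃eq : ∀ x y, σ₃ x y = 0 ↔ x = y)
    (hσ₃symm : ∀ x y, σ₃ x y = σ₃ y x)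
    (φ : ℝ → ℝ)
    (hφpos : ∀ s, 0 ≤ s → 0 ≤ φ s)
    (hφmono : ∀ s t, 0 ≤ s → s ≤ t → φ s ≤ φ t)
    (hφsum : ∀ s, 0 < s → Summable (fun n : ℕ => φ^[n + 1] s))
    (F : M → M)
    (hi : ∀ u : M, F u ≠ u → F (F u) ≠ u)
    (hcont : Continuous F)
    (hcontr : ∀ x y z : M, x ≠ y → y ≠ z → z ≠ x →
      dist (F x) (F y) + σ₂ (F y) (F z) + σ₃ (F z) (F x) ≤
        φ (dist x y + σ₂ y z + σ₃ z x)) :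
    (∃ u : M, F u = u) ∧
      (∀ x y z : M, F x = x → F y = y → F z = z → x = y ∨ y = z ∨ z = x) := by
  -- key fact: φ s < s for s > 0
  have hφlt : ∀ s : ℝ, 0 < s → φ s < s := by
    intro s hs
    by_contra h
    push_neg at h
    have key : ∀ n : ℕ, s ≤ φ^[n + 1] s := by
      intro n
      induction n with
      | zero => simpa using h
      | succ n ih =>
        calc s ≤ φ s := h
        _ ≤ φ (φ^[n + 1] s) := hφmono s _ hs.le ih
        _ = φ^[n + 2] s := (Function.iterate_succ_apply' φ (n+1) s).symm
    have htend := (hφsum s hs).tendsto_atTop_zero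
    have : s ≤ 0 := ge_of_tendsto htend (Filter.Eventually.of_forall fun n => key n)
    linarith
  constructor
  · -- existence
    by_contra hno
    push_neg at hno
    obtain ⟨a, -, -, -⟩ := hM
    set f : ℕ → M := fun n => F^[n] a with hf
    have hstep : ∀ n, f (n + 1) = F (f n) := fun n => Function.iterate_succ_apply' F n a
    have hne : ∀ n, f (n + 1) ≠ f n := by
      intro n
      rw [hstep n]
      exact hno (f n)
    have hne2 : ∀ n, f (n + 2) ≠ f n := by
      intro n
      have := hi (f n) (by rw [← hstep n]; exact hne n)
      rwa [← hstep n, ← hstep (n + 1)] at this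
    set D : ℕ → ℝ := fun n => dist (f n) (f (n + 1)) + σ₂ (f (n + 1)) (f (n + 2)) + σ₃ (f (n + 2)) (f n) with hD
    have hDpos : ∀ n, 0 ≤ D n := fun n =>
      add_nonneg (add_nonneg dist_nonneg (hσ₂pos _ _)) (hσ₃pos _ _)
    have hDrec : ∀ n, D (n + 1) ≤ φ (D n) := by
      intro n
      have h := hcontr (f n) (f (n + 1)) (f (n + 2)) (hne n).symm (hne (n + 1)).symm (hne2 n)
      rw [← hstep n, ← hstep (n + 1), ← hstep (n + 2)] at h
      exact h
    have hDle : ∀ n, D n ≤ φ^[n] (D 0) := by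
      intro n
      induction n with
      | zero => simp
      | succ n ih =>
        calc D (n + 1) ≤ φ (D n) := hDrec n
        _ ≤ φ (φ^[n] (D 0)) := hφmono _ _ (hDpos n) ih
        _ = φ^[n + 1] (D 0) := (Function.iterate_succ_apply' φ n (D 0)).symm
    have hD0 : 0 < D 0 := by
      have h1 : 0 < dist (f 0) (f 1) := dist_pos.mpr (hne 0).symm
      have := hσ₂pos (f 1) (f 2)
      have := hσ₃pos (f 2) (f 0)
      simp only [hD]
      linarith
    have hsum : Summable (fun n : ℕ => φ^[n] (D 0)) := by
      have := hφsum (D 0) hD0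
      exact (summable_nat_add_iff 1).mp this
    have hcauchy : CauchySeq f := by
      apply cauchySeq_of_dist_le_of_summable (fun n => φ^[n] (D 0)) _ hsum
      intro n
      have h1 : dist (f n) (f (n + 1)) ≤ D n := by
        have := hσ₂pos (f (n + 1)) (f (n + 2))
        have := hσ₃pos (f (n + 2)) (f n)
        simp only [hD]
        linarith
      exact h1.trans (hDle n)
    obtain ⟨u, hu⟩ := cauchySeq_tendsto_of_complete hcauchy
    have h1 : Filter.Tendsto (fun n => f (n + 1)) Filter.atTop (nhds u) :=
      hu.comp (Filter.tendsto_add_atTop_nat 1)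
    have h2 : Filter.Tendsto (fun n => F (f n)) Filter.atTop (nhds (F u)) :=
      (hcont.continuousAt.tendsto).comp hu
    have h3 : (fun n => f (n + 1)) = fun n => F (f n) := funext hstep
    rw [h3] at h1
    exact hno u (tendsto_nhds_unique h2 h1)
  · -- at most two fixed points
    intro x y z hx hy hz
    by_contra h
    push_neg at h
    obtain ⟨hxy, hyz, hzx⟩ := h
    have h := hcontr x y z hxy hyz (Ne.symm (fun e => hzx e.symm))
    rw [hx, hy, hz] at h
    set s := dist x y + σ₂ y z + σ₃ z x with hs
    have hspos : 0 < s := by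
      have h1 : 0 < dist x y := dist_pos.mpr hxy
      have := hσ₂pos y z
      have := hσ₃pos z x
      linarith
    have := hφlt s hspos
    linarith
end

section
/- Let (M, d) be a metric space with |M| ≥ 3 and λ ∈ (0,1). If F: M → CB(M) satisfies H(Fx,Fy) + H(Fy,Fz) + 𝒟(Fz,Fx) ≤ λ·(d(x,y) + d(y,z) + d(z,x)) for all pairwise distinct x, y, z ∈ M, then F is continuous as a map from (M, d) to (CB(M), H). -/
/-- The joint diameter `𝒟(A,B) = sup_{(a,b) ∈ A × B} dist a b`. -/
noncomputable def jointDiam {M : Type*} [MetricSpace M] (A B : Set M) : ℝ :=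
  sSup (Set.image2 dist A B)

lemma hausdorffDist_le_jointDiam {M : Type*} [MetricSpace M] {A B : Set M}
    (hA : A.Nonempty) (hB : B.Nonempty)
    (hbA : Bornology.IsBounded A) (hbB : Bornology.IsBounded B) :
    Metric.hausdorffDist A B ≤ jointDiam A B := by
  have hbdd : BddAbove (Set.image2 dist A B) := by
    refine ⟨Metric.diam (A ∪ B), ?_⟩
    rintro r ⟨a, ha, b, hb, rfl⟩
    exact Metric.dist_le_diam_of_mem (hbA.union hbB) (Or.inl ha) (Or.inr hb)
  have hnonneg : 0 ≤ jointDiam A B := by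
    obtain ⟨a, ha⟩ := hA; obtain ⟨b, hb⟩ := hB
    exact dist_nonneg.trans (le_csSup hbdd (Set.mem_image2_of_mem ha hb))
  apply Metric.hausdorffDist_le_of_mem_dist hnonneg
  · intro a ha
    obtain ⟨b, hb⟩ := hB
    exact ⟨b, hb, le_csSup hbdd (Set.mem_image2_of_mem ha hb)⟩
  · intro b hb
    obtain ⟨a, ha⟩ := hA
    exact ⟨a, ha, by rw [dist_comm]; exact le_csSup hbdd (Set.mem_image2_of_mem ha hb)⟩

theorem stmt_10 {M : Type*} [MetricSpace M]
    (hM : ∃ a b c : M, a ≠ b ∧ b ≠ c ∧ c ≠ a)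
    (F : M → Set M)
    (hne : ∀ x, (F x).Nonempty) (hcl : ∀ x, IsClosed (F x))
    (hbd : ∀ x, Bornology.IsBounded (F x))
    (lam : ℝ) (hl0 : 0 < lam) (hl1 : lam < 1)
    (hcontr : ∀ x y z : M, x ≠ y → y ≠ z → z ≠ x →
      Metric.hausdorffDist (F x) (F y) + Metric.hausdorffDist (F y) (F z) +
          jointDiam (F z) (F x) ≤
        lam * (dist x y + dist y z + dist z x)) :
    ∀ x : M, ∀ ε > (0 : ℝ), ∃ δ > (0 : ℝ), ∀ y : M, dist y x < δ →
      Metric.hausdorffDist (F y) (F x) < ε := by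
  intro x ε hε
  by_cases hiso : ∃ r > 0, ∀ y : M, dist y x < r → y = x
  · obtain ⟨r, hr, hrx⟩ := hiso
    refine ⟨r, hr, fun y hy => ?_⟩
    rw [hrx y hy, Metric.hausdorffDist_self_zero]
    exact hε
  · push_neg at hiso
    have hδ : 0 < ε / (8 * lam) := by positivity
    refine ⟨ε / (8 * lam), hδ, fun y hy => ?_⟩
    by_cases hyx : y = x
    · rw [hyx, Metric.hausdorffDist_self_zero]; exact hε
    · have hdyx : 0 < dist y x := dist_pos.mpr hyx
      obtain ⟨z, hz1, hz2⟩ := hiso (min (ε / (8 * lam)) (dist y x)) (lt_min hδ hdyx)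
      have hzy : z ≠ y := by
        intro h
        rw [h] at hz1
        exact absurd (hz1.trans_le (min_le_right _ _)) (lt_irrefl _)
      have key := hcontr x z y (Ne.symm hz2) hzy hyx
      have hjd : jointDiam (F y) (F x) ≤ lam * (dist x z + dist z y + dist y x) := by
        have h1 := Metric.hausdorffDist_nonneg (s := F x) (t := F z)
        have h2 := Metric.hausdorffDist_nonneg (s := F z) (t := F y)
        linarith
      have hxz : dist x z < ε / (8 * lam) := by
        rw [dist_comm]; exact hz1.trans_le (min_le_left _ _)
      have hzy' : dist z y ≤ dist z x + dist x y := dist_triangle z x y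
      have hxy : dist x y < ε / (8 * lam) := by rw [dist_comm]; exact hy
      have hzx : dist z x < ε / (8 * lam) := hz1.trans_le (min_le_left _ _)
      have hsum : dist x z + dist z y + dist y x < 4 * (ε / (8 * lam)) := by linarith
      have hmul : lam * (dist x z + dist z y + dist y x) < lam * (4 * (ε / (8 * lam))) :=
        mul_lt_mul_of_pos_left hsum hl0
      have heq : lam * (4 * (ε / (8 * lam))) = ε / 2 := by
        field_simp
        ring
      calc Metric.hausdorffDist (F y) (F x)
          ≤ jointDiam (F y) (F x) :=
            hausdorffDist_le_jointDiam (hne y) (hne x) (hbd y) (hbd x)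
        _ ≤ lam * (dist x z + dist z y + dist y x) := hjd
        _ < ε := by rw [heq] at hmul; linarith
end

section
/- Let (M, d) be a complete metric space with |M| ≥ 3. Let F: M → CB(M) be a multi-valued mapping such that: (i) for all u, v ∈ M, if v ∈ Fu and u ≠ v then u ∉ Fv; (ii) there exists λ ∈ (0,1) with H(Fx,Fy) + H(Fy,Fz) + 𝒟(Fz,Fx) ≤ λ·(d(x,y) + d(y,z) + d(z,x)) for all pairwise distinct x, y, z ∈ M. Then F has a fixed point, i.e., there exists u* ∈ M with u* ∈ Fu*. -/
open Metric Filter Topology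

lemma dist_le_jointDiam' {M : Type*} [MetricSpace M] {A B : Set M} {a b : M}
    (hA : Bornology.IsBounded A) (hB : Bornology.IsBounded B)
    (ha : a ∈ A) (hb : b ∈ B) : dist a b ≤ jointDiam A B := by
  obtain ⟨CA, hCA⟩ := Metric.isBounded_iff.mp hA
  obtain ⟨CB, hCB⟩ := Metric.isBounded_iff.mp hB
  refine le_csSup ⟨CA + dist a b + CB, ?_⟩ (Set.mem_image2_of_mem ha hb)
  rintro r ⟨p, hp, q, hq, rfl⟩
  have h4 := dist_triangle4 p a b q
  have h1 := hCA hp ha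
  have h2 := hCB hb hq
  linarith

theorem stmt_11 {M : Type*} [MetricSpace M] [CompleteSpace M]
    (hM : ∃ a b c : M, a ≠ b ∧ b ≠ c ∧ c ≠ a)
    (F : M → Set M)
    (hne : ∀ x, (F x).Nonempty) (hcl : ∀ x, IsClosed (F x))
    (hbd : ∀ x, Bornology.IsBounded (F x))
    (hi : ∀ u v : M, v ∈ F u → u ≠ v → u ∉ F v)
    (lam : ℝ) (hl0 : 0 < lam) (hl1 : lam < 1)
    (hcontr : ∀ x y z : M, x ≠ y → y ≠ z → z ≠ x →
      Metric.hausdorffDist (F x) (F y) + Metric.hausdorffDist (F y) (F z) +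
          jointDiam (F z) (F x) ≤
        lam * (dist x y + dist y z + dist z x)) :
    ∃ u : M, u ∈ F u := by
  by_contra hno
  push_neg at hno
  obtain ⟨a0, b0, c0, hab, hbc, hca⟩ := hM
  set μ : ℝ := (1 + lam) / 2 with hμdef
  have hlm : lam < μ := by rw [hμdef]; linarith
  have hμ0 : 0 < μ := by rw [hμdef]; linarith
  have hμ1 : μ < 1 := by rw [hμdef]; linarith
  set ε : ℕ → ℝ := fun n => (μ - lam) * μ ^ n with hεdef
  have hεpos : ∀ n, 0 < ε n := fun n => mul_pos (by linarith) (pow_pos hμ0 n)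
  have hfin : ∀ p q : M, EMetric.hausdorffEdist (F p) (F q) ≠ ⊤ := fun p q =>
    Metric.hausdorffEdist_ne_top_of_nonempty_of_bounded (hne p) (hne q) (hbd p) (hbd q)
  have hsel : ∀ (n : ℕ) (p : M), ∃ q, q ∈ F p ∧ dist p q < Metric.infDist p (F p) + ε n := by
    intro n p
    have hlt : Metric.infDist p (F p) < Metric.infDist p (F p) + ε n := by linarith [hεpos n]
    obtain ⟨y, hy, hdy⟩ := (Metric.infDist_lt_iff (hne p)).mp hlt
    exact ⟨y, hy, hdy⟩
  choose g hg hgd using hsel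
  let x : ℕ → M := fun n => Nat.rec a0 g n
  have hmem : ∀ n, x (n + 1) ∈ F (x n) := fun n => hg n (x n)
  have hdlt : ∀ n, dist (x n) (x (n + 1)) < Metric.infDist (x n) (F (x n)) + ε n :=
    fun n => hgd n (x n)
  have hne1 : ∀ n, x n ≠ x (n + 1) := by
    intro n h
    have h2 := hmem n
    rw [← h] at h2
    exact hno (x n) h2
  have hne2 : ∀ n, x n ≠ x (n + 2) := by
    intro n h
    have h1 : x n ∉ F (x (n + 1)) := hi (x n) (x (n + 1)) (hmem n) (hne1 n)
    have h2 := hmem (n + 1)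
    rw [← h] at h2
    exact h1 h2
  have hH1 : ∀ n, dist (x (n + 1)) (x (n + 2)) - ε (n + 1) ≤
      Metric.hausdorffDist (F (x n)) (F (x (n + 1))) := by
    intro n
    have h1 := hdlt (n + 1)
    have h2 : Metric.infDist (x (n + 1)) (F (x (n + 1))) ≤
        Metric.hausdorffDist (F (x n)) (F (x (n + 1))) :=
      Metric.infDist_le_hausdorffDist_of_mem (hmem n) (hfin _ _)
    linarith
  have hjd_nonneg : ∀ j, 0 ≤ jointDiam (F (x (j + 2))) (F (x j)) := fun j =>
    le_trans dist_nonneg (dist_le_jointDiam' (hbd _) (hbd _) (hmem (j + 2)) (hmem j))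
  -- key recurrence
  have hrec : ∀ j : ℕ,
      dist (x (j + 2)) (x (j + 3)) + dist (x (j + 3)) (x (j + 4)) +
          jointDiam (F (x (j + 3))) (F (x (j + 1))) ≤
        lam * (dist (x (j + 1)) (x (j + 2)) + dist (x (j + 2)) (x (j + 3)) +
          jointDiam (F (x (j + 2))) (F (x j))) + ε (j + 2) + ε (j + 3) := by
    intro j
    have hd1 : x (j + 1) ≠ x (j + 2) := hne1 (j + 1)
    have hd2 : x (j + 2) ≠ x (j + 3) := hne1 (j + 2)
    have hd3 : x (j + 3) ≠ x (j + 1) := (hne2 (j + 1)).symm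
    have hc := hcontr (x (j + 1)) (x (j + 2)) (x (j + 3)) hd1 hd2 hd3
    have hA : dist (x (j + 2)) (x (j + 3)) - ε (j + 2) ≤
        Metric.hausdorffDist (F (x (j + 1))) (F (x (j + 2))) := hH1 (j + 1)
    have hB : dist (x (j + 3)) (x (j + 4)) - ε (j + 3) ≤
        Metric.hausdorffDist (F (x (j + 2))) (F (x (j + 3))) := hH1 (j + 2)
    have hD : dist (x (j + 3)) (x (j + 1)) ≤ jointDiam (F (x (j + 2))) (F (x j)) :=
      dist_le_jointDiam' (hbd _) (hbd _) (hmem (j + 2)) (hmem j)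
    have hmono : lam * (dist (x (j + 1)) (x (j + 2)) + dist (x (j + 2)) (x (j + 3)) +
          dist (x (j + 3)) (x (j + 1))) ≤
        lam * (dist (x (j + 1)) (x (j + 2)) + dist (x (j + 2)) (x (j + 3)) +
          jointDiam (F (x (j + 2))) (F (x j))) :=
      mul_le_mul_of_nonneg_left (by linarith) hl0.le
    linarith
  set C : ℝ := max (dist (x 1) (x 2) + dist (x 2) (x 3) + jointDiam (F (x 2)) (F (x 0))) 2
    with hCdef
  have hC2 : (2 : ℝ) ≤ C := le_max_right _ _
  have hRC : ∀ j : ℕ,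
      dist (x (j + 1)) (x (j + 2)) + dist (x (j + 2)) (x (j + 3)) +
        jointDiam (F (x (j + 2))) (F (x j)) ≤ C * μ ^ j := by
    intro j
    induction j with
    | zero =>
      have h := le_max_left (dist (x 1) (x 2) + dist (x 2) (x 3) +
        jointDiam (F (x 2)) (F (x 0))) (2 : ℝ)
      rw [← hCdef] at h
      simpa using h
    | succ k ih =>
      have h1 := hrec k
      have hpk : (0 : ℝ) ≤ μ ^ k := (pow_pos hμ0 k).le
      have hε2 : ε (k + 2) = (μ - lam) * (μ ^ k * (μ * μ)) := by
        rw [hεdef]; ring_nf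
      have hε3 : ε (k + 3) = (μ - lam) * (μ ^ k * (μ * μ * μ)) := by
        rw [hεdef]; ring_nf
      have hps : μ ^ (k + 1) = μ ^ k * μ := pow_succ μ k
      have hmul : lam * (dist (x (k + 1)) (x (k + 2)) + dist (x (k + 2)) (x (k + 3)) +
            jointDiam (F (x (k + 2))) (F (x k))) ≤ lam * (C * μ ^ k) :=
        mul_le_mul_of_nonneg_left ih hl0.le
      show dist (x (k + 2)) (x (k + 3)) + dist (x (k + 3)) (x (k + 4)) +
          jointDiam (F (x (k + 3))) (F (x (k + 1))) ≤ C * μ ^ (k + 1)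
      have hkey : lam * (C * μ ^ k) + ε (k + 2) + ε (k + 3) ≤ C * μ ^ (k + 1) := by
        rw [hε2, hε3, hps]
        have hμ2 : μ * μ ≤ 1 := by nlinarith
        have hμ3 : μ * μ * μ ≤ 1 := by nlinarith
        have h2 : 0 ≤ (C - 2) * ((μ - lam) * μ ^ k) :=
          mul_nonneg (by linarith) (mul_nonneg (by linarith) hpk)
        have h3 : 0 ≤ ((μ - lam) * μ ^ k) * (2 - μ * μ - μ * μ * μ) :=
          mul_nonneg (mul_nonneg (by linarith) hpk) (by linarith)
        nlinarith [h2, h3]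
      linarith
  set C' : ℝ := max (C / μ) (dist (x 0) (x 1)) with hC'def
  have hgeo : ∀ n, dist (x n) (x (n + 1)) ≤ C' * μ ^ n := by
    intro n
    cases n with
    | zero =>
      have h := le_max_right (C / μ) (dist (x 0) (x 1))
      rw [← hC'def] at h
      simpa using h
    | succ k =>
      have h1 : dist (x (k + 1)) (x (k + 2)) ≤ C * μ ^ k := by
        have h2 := hRC k
        have h3 := hjd_nonneg k
        have h4 : (0 : ℝ) ≤ dist (x (k + 2)) (x (k + 3)) := dist_nonneg
        linarith
      have h3 : C * μ ^ k = C / μ * μ ^ (k + 1) := by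
        rw [pow_succ]; field_simp
      have h4 : C / μ * μ ^ (k + 1) ≤ C' * μ ^ (k + 1) :=
        mul_le_mul_of_nonneg_right (le_max_left _ _) (pow_pos hμ0 _).le
      show dist (x (k + 1)) (x (k + 2)) ≤ C' * μ ^ (k + 1)
      linarith
  have hcauchy : CauchySeq x := cauchySeq_of_le_geometric μ C' hμ1 hgeo
  obtain ⟨u, hu⟩ := cauchySeq_tendsto_of_complete hcauchy
  by_cases hfr : ∃ᶠ n in atTop, x n = u
  · have hfr2 : ∃ᶠ n in atTop, x (n + 1) ∈ F u := hfr.mono fun n hn => hn ▸ hmem n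
    have htd : Tendsto (fun n => x (n + 1)) atTop (𝓝 u) :=
      hu.comp (tendsto_add_atTop_nat 1)
    exact hno u ((hcl u).mem_of_frequently_of_tendsto hfr2 htd)
  · rw [not_frequently] at hfr
    obtain ⟨N, hN⟩ := eventually_atTop.mp hfr
    obtain ⟨w, hw⟩ := hne u
    have key : ∀ m ≥ N, dist u w ≤ dist (x (m + 1)) u +
        lam * (dist (x m) (x (m + 1)) + dist (x (m + 1)) u + dist (x m) u) := by
      intro m hm
      have h1 : x m ≠ x (m + 1) := hne1 m
      have h2 : x (m + 1) ≠ u := hN (m + 1) (le_trans hm (Nat.le_succ m))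
      have h3 : u ≠ x m := fun h => hN m hm h.symm
      have hc := hcontr (x m) (x (m + 1)) u h1 h2 h3
      rw [dist_comm u (x m)] at hc
      have hD : dist w (x (m + 1)) ≤ jointDiam (F u) (F (x m)) :=
        dist_le_jointDiam' (hbd _) (hbd _) hw (hmem m)
      have hHa : (0 : ℝ) ≤ Metric.hausdorffDist (F (x m)) (F (x (m + 1))) :=
        Metric.hausdorffDist_nonneg
      have hHb : (0 : ℝ) ≤ Metric.hausdorffDist (F (x (m + 1))) (F u) :=
        Metric.hausdorffDist_nonneg
      have htri : dist u w ≤ dist (x (m + 1)) u + dist w (x (m + 1)) := by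
        have := dist_triangle u (x (m + 1)) w
        rw [dist_comm u (x (m + 1)), dist_comm (x (m + 1)) w] at this
        linarith
      linarith
    have hd0 : Tendsto (fun m => dist (x m) u) atTop (𝓝 0) :=
      tendsto_iff_dist_tendsto_zero.mp hu
    have hd1 : Tendsto (fun m => dist (x (m + 1)) u) atTop (𝓝 0) :=
      hd0.comp (tendsto_add_atTop_nat 1)
    have hd2 : Tendsto (fun m => dist (x m) (x (m + 1))) atTop (𝓝 0) := by
      apply squeeze_zero (fun n => dist_nonneg)
        (fun n => dist_triangle_right (x n) (x (n + 1)) u)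
      simpa using hd0.add hd1
    have hsum : Tendsto (fun m => dist (x m) (x (m + 1)) + dist (x (m + 1)) u +
        dist (x m) u) atTop (𝓝 0) := by
      simpa using (hd2.add hd1).add hd0
    have hr : Tendsto (fun m => dist (x (m + 1)) u +
        lam * (dist (x m) (x (m + 1)) + dist (x (m + 1)) u + dist (x m) u))
        atTop (𝓝 0) := by
      simpa using hd1.add (hsum.const_mul lam)
    have hb0 : dist u w ≤ 0 := ge_of_tendsto hr (eventually_atTop.mpr ⟨N, key⟩)
    have huw : u = w := dist_le_zero.mp hb0
    exact hno u (huw.symm ▸ hw)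
end

section
/- Let (M, d) be a metric space with |M| ≥ 3 and λ ∈ (0, 1/2). If F: M → CB(M) satisfies H(Fx,Fy) + H(Fy,Fz) + H(Fz,Fx) ≤ λ·(d(x,y) + d(y,z) + d(z,x)) for all pairwise distinct x, y, z ∈ M, then F is continuous as a map from (M, d) to (CB(M), H). -/
theorem stmt_13 {M : Type*} [MetricSpace M]
    (hM : ∃ a b c : M, a ≠ b ∧ b ≠ c ∧ c ≠ a)
    (F : M → Set M)
    (hne : ∀ x, (F x).Nonempty) (hcl : ∀ x, IsClosed (F x))
    (hbd : ∀ x, Bornology.IsBounded (F x))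
    (lam : ℝ) (hl0 : 0 < lam) (hl1 : lam < 1 / 2)
    (hcontr : ∀ x y z : M, x ≠ y → y ≠ z → z ≠ x →
      Metric.hausdorffDist (F x) (F y) + Metric.hausdorffDist (F y) (F z) +
          Metric.hausdorffDist (F z) (F x) ≤
        lam * (dist x y + dist y z + dist z x)) :
    ∀ x : M, ∀ ε > (0 : ℝ), ∃ δ > (0 : ℝ), ∀ y : M, dist y x < δ →
      Metric.hausdorffDist (F y) (F x) < ε := by
  have fin : ∀ a b : M, EMetric.hausdorffEdist (F a) (F b) ≠ ⊤ := fun a b =>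
    Metric.hausdorffEdist_ne_top_of_nonempty_of_bounded (hne a) (hne b) (hbd a) (hbd b)
  intro x ε hε
  by_cases hiso : ∃ r > 0, ∀ w : M, dist w x < r → w = x
  · obtain ⟨r, hr, hrw⟩ := hiso
    refine ⟨r, hr, fun y hy => ?_⟩
    rw [hrw y hy, Metric.hausdorffDist_self_zero]
    exact hε
  · push_neg at hiso
    set δ := ε / (2 * lam) with hδdef
    have hδ : 0 < δ := by positivity
    refine ⟨δ, hδ, fun y hy => ?_⟩
    by_cases hyx : y = x
    · subst hyx
      simpa [Metric.hausdorffDist_self_zero] using hε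
    · have hyx' : 0 < dist y x := dist_pos.mpr hyx
      obtain ⟨z, hz1, hzx⟩ := hiso (min δ (dist y x)) (lt_min hδ hyx')
      have hzy : z ≠ y := by
        intro h
        subst h
        exact absurd (lt_of_lt_of_le hz1 (min_le_right _ _)) (lt_irrefl _)
      have hc := hcontr x y z (Ne.symm hyx) (Ne.symm hzy) hzx
      have htri : Metric.hausdorffDist (F x) (F y) ≤
          Metric.hausdorffDist (F x) (F z) + Metric.hausdorffDist (F z) (F y) :=
        Metric.hausdorffDist_triangle (fin x z)
      have hcomm1 : Metric.hausdorffDist (F y) (F z) = Metric.hausdorffDist (F z) (F y) :=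
        Metric.hausdorffDist_comm
      have hcomm2 : Metric.hausdorffDist (F z) (F x) = Metric.hausdorffDist (F x) (F z) :=
        Metric.hausdorffDist_comm
      have hcomm3 : Metric.hausdorffDist (F y) (F x) = Metric.hausdorffDist (F x) (F y) :=
        Metric.hausdorffDist_comm
      have hzxδ : dist z x < δ := lt_of_lt_of_le hz1 (min_le_left _ _)
      have hxy : dist x y < δ := by rwa [dist_comm]
      have hyz : dist y z < 2 * δ := by
        calc dist y z ≤ dist y x + dist x z := dist_triangle _ _ _
          _ < δ + δ := by rw [dist_comm x z]; exact add_lt_add hy hzxδ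
          _ = 2 * δ := by ring
      have hsum : lam * (dist x y + dist y z + dist z x) < lam * (4 * δ) := by
        apply mul_lt_mul_of_pos_left _ hl0
        linarith
      have h4δ : lam * (4 * δ) = 2 * ε := by
        rw [hδdef]; field_simp; ring
      rw [hcomm3]
      nlinarith [Metric.hausdorffDist_nonneg (s := F x) (t := F y)]
end

section
/- Let (M, d) be a complete metric space with |M| ≥ 3. Let F: M → CB(M) satisfy: (i) for all u, v ∈ M, if v ∈ Fu and u ≠ v then u ∉ Fv; (ii) there exists λ ∈ (0, 1/2) with H(Fx,Fy) + H(Fy,Fz) + H(Fz,Fx) ≤ λ·(d(x,y) + d(y,z) + d(z,x)) for all pairwise distinct x, y, z ∈ M. Then F has a fixed point. -/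
theorem stmt_14 {M : Type*} [MetricSpace M] [CompleteSpace M]
    (hM : ∃ a b c : M, a ≠ b ∧ b ≠ c ∧ c ≠ a)
    (F : M → Set M)
    (hne : ∀ x, (F x).Nonempty) (hcl : ∀ x, IsClosed (F x))
    (hbd : ∀ x, Bornology.IsBounded (F x))
    (hi : ∀ u v : M, v ∈ F u → u ≠ v → u ∉ F v)
    (lam : ℝ) (hl0 : 0 < lam) (hl1 : lam < 1 / 2)
    (hcontr : ∀ x y z : M, x ≠ y → y ≠ z → z ≠ x →
      Metric.hausdorffDist (F x) (F y) + Metric.hausdorffDist (F y) (F z) +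
          Metric.hausdorffDist (F z) (F x) ≤
        lam * (dist x y + dist y z + dist z x)) :
    ∃ u : M, u ∈ F u := by
  by_contra hfix
  push_neg at hfix
  -- hfix : ∀ u, u ∉ F u
  have fin : ∀ a b : M, EMetric.hausdorffEdist (F a) (F b) ≠ ⊤ := fun a b =>
    Metric.hausdorffEdist_ne_top_of_nonempty_of_bounded (hne a) (hne b) (hbd a) (hbd b)
  set r : ℝ := (1 + 2 * lam) / 2 with hr_def
  have hμr : 2 * lam < r := by rw [hr_def]; linarith
  have hr0 : 0 < r := by rw [hr_def]; linarith
  have hr1 : r < 1 := by rw [hr_def]; linarith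
  have step : ∀ (n : ℕ) (a : M), ∃ y, y ∈ F a ∧ dist a y < Metric.infDist a (F a) + r ^ n := by
    intro n a
    have h : Metric.infDist a (F a) < Metric.infDist a (F a) + r ^ n := by
      have := pow_pos hr0 n; linarith
    obtain ⟨y, hy, hy'⟩ := (Metric.infDist_lt_iff (hne a)).1 h
    exact ⟨y, hy, hy'⟩
  choose f hf1 hf2 using step
  obtain ⟨x0, -, -, -, -⟩ := hM
  set x : ℕ → M := fun n => Nat.rec x0 (fun n a => f n a) n with hx_def
  have hx : ∀ n, x (n + 1) = f n (x n) := fun n => rfl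
  have hmem : ∀ n, x (n + 1) ∈ F (x n) := fun n => by rw [hx]; exact hf1 n (x n)
  have hlt : ∀ n, dist (x n) (x (n + 1)) < Metric.infDist (x n) (F (x n)) + r ^ n := fun n => by
    rw [hx]; exact hf2 n (x n)
  have hne' : ∀ n, x n ≠ x (n + 1) := by
    intro n h
    exact hfix (x n) (h ▸ hmem n)
  have hne2 : ∀ n, x n ≠ x (n + 2) := by
    intro n h
    have : x n ∉ F (x (n + 1)) := hi (x n) (x (n + 1)) (hmem n) (hne' n)
    exact this (h ▸ hmem (n + 1))
  have hinf : ∀ n, Metric.infDist (x (n + 1)) (F (x (n + 1))) ≤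
      Metric.hausdorffDist (F (x n)) (F (x (n + 1))) := fun n =>
    Metric.infDist_le_hausdorffDist_of_mem (hmem n) (fin _ _)
  set d : ℕ → ℝ := fun n => dist (x n) (x (n + 1)) with hd_def
  have hd0 : ∀ n, 0 ≤ d n := fun n => dist_nonneg
  have key : ∀ n, d (n + 1) + d (n + 2) ≤
      2 * lam * (d n + d (n + 1)) + (r ^ (n + 1) + r ^ (n + 2)) := by
    intro n
    have hc := hcontr (x n) (x (n + 1)) (x (n + 2)) (hne' n) (hne' (n + 1)) (hne2 n).symm
    have htri : dist (x (n + 2)) (x n) ≤ d (n + 1) + d n := by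
      have := dist_triangle (x (n + 2)) (x (n + 1)) (x n)
      simp only [hd_def]
      rw [dist_comm (x (n + 2)) (x (n + 1)), dist_comm (x (n + 1)) (x n)] at this
      linarith
    have h3 : 0 ≤ Metric.hausdorffDist (F (x (n + 2))) (F (x n)) := Metric.hausdorffDist_nonneg
    have hle1 : d (n + 1) ≤ Metric.hausdorffDist (F (x n)) (F (x (n + 1))) + r ^ (n + 1) := by
      have := hlt (n + 1); have := hinf n; simp only [hd_def]; linarith [hlt (n+1), hinf n]
    have hle2 : d (n + 2) ≤
        Metric.hausdorffDist (F (x (n + 1))) (F (x (n + 2))) + r ^ (n + 2) := by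
      simp only [hd_def]; linarith [hlt (n + 2), hinf (n + 1)]
    have hmul : lam * (dist (x n) (x (n + 1)) + dist (x (n + 1)) (x (n + 2)) +
        dist (x (n + 2)) (x n)) ≤ lam * (d n + d (n + 1) + (d (n + 1) + d n)) := by
      apply mul_le_mul_of_nonneg_left _ hl0.le
      simp only [hd_def]; linarith
    simp only [hd_def] at *
    nlinarith
  set S : ℝ := d 0 + d 1 with hS_def
  have sbound : ∀ n, d n + d (n + 1) ≤ r ^ n * (S + 2 * n) := by
    intro n
    induction n with
    | zero => simp [hS_def]
    | succ n ih =>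
      have h1 := key n
      have hrpow : (0:ℝ) < r ^ n := pow_pos hr0 n
      have hsn : 0 ≤ d n + d (n + 1) := by linarith [hd0 n, hd0 (n + 1)]
      have h2 : 2 * lam * (d n + d (n + 1)) ≤ r * (d n + d (n + 1)) := by
        nlinarith
      have h3 : r ^ (n + 2) ≤ r ^ (n + 1) :=
        pow_le_pow_of_le_one hr0.le hr1.le (by omega)
      have h4 : r * (d n + d (n + 1)) ≤ r * (r ^ n * (S + 2 * n)) := by
        nlinarith
      have : d (n + 1) + d (n + 2) ≤ r ^ (n + 1) * (S + 2 * n) + 2 * r ^ (n + 1) := by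
        calc d (n + 1) + d (n + 2) ≤ r * (d n + d (n + 1)) + (r ^ (n + 1) + r ^ (n + 2)) := by
              linarith
          _ ≤ r * (r ^ n * (S + 2 * n)) + 2 * r ^ (n + 1) := by linarith
          _ = r ^ (n + 1) * (S + 2 * n) + 2 * r ^ (n + 1) := by ring
      calc d (n + 1) + d (n + 1 + 1) ≤ r ^ (n + 1) * (S + 2 * n) + 2 * r ^ (n + 1) := this
        _ = r ^ (n + 1) * (S + 2 * ↑(n + 1)) := by push_cast; ring
  set b : ℕ → ℝ := fun n => S * r ^ n + 2 * (↑n * r ^ n) with hb_def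
  have dbound : ∀ n, d n ≤ b n := by
    intro n
    have := sbound n
    have := hd0 (n + 1)
    simp only [hb_def]
    nlinarith [this, sbound n]
  have hb_summable : Summable b := by
    apply Summable.add
    · exact (summable_geometric_of_lt_one hr0.le hr1).mul_left S
    · have h := summable_pow_mul_geometric_of_norm_lt_one 1 (r := r) (by
        rw [Real.norm_eq_abs, abs_of_pos hr0]; exact hr1)
      simpa using h.mul_left 2
  have hcauchy : CauchySeq x :=
    cauchySeq_of_dist_le_of_summable b (fun n => dbound n) hb_summable
  obtain ⟨u, hu⟩ := cauchySeq_tendsto_of_complete hcauchy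
  have hb0 : Filter.Tendsto b Filter.atTop (nhds 0) := hb_summable.tendsto_atTop_zero
  have hd_tendsto : Filter.Tendsto d Filter.atTop (nhds 0) :=
    squeeze_zero hd0 dbound hb0
  have hxu : Filter.Tendsto (fun n => dist (x n) u) Filter.atTop (nhds 0) :=
    tendsto_iff_dist_tendsto_zero.1 hu
  have hiu : 0 ≤ Metric.infDist u (F u) := Metric.infDist_nonneg
  have hmain : Metric.infDist u (F u) ≤ 0 := by
    by_cases hA : ∀ N : ℕ, ∃ n, N ≤ n ∧ x n = u
    · apply le_of_forall_pos_le_add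
      intro ε hε
      have : ∀ᶠ n in Filter.atTop, b n < ε := hb0.eventually (gt_mem_nhds hε)
      obtain ⟨N, hN⟩ := Filter.eventually_atTop.1 this
      obtain ⟨n, hn, hxn⟩ := hA N
      have h1 : x (n + 1) ∈ F u := hxn ▸ hmem n
      have h2 : Metric.infDist u (F u) ≤ dist u (x (n + 1)) :=
        Metric.infDist_le_dist_of_mem h1
      have h3 : dist u (x (n + 1)) = d n := by
        simp only [hd_def]; rw [← hxn]
      have := hN n hn
      have := dbound n
      linarith
    · push_neg at hA
      obtain ⟨N, hN⟩ := hA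
      set t : ℕ → ℝ := fun n => dist u (x (n + 1)) +
        lam * (d n + dist (x (n + 1)) u + dist u (x n)) with ht_def
      have ht_tendsto : Filter.Tendsto t Filter.atTop (nhds 0) := by
        have h1 : Filter.Tendsto (fun n => dist (x (n + 1)) u) Filter.atTop (nhds 0) := by
          have := hxu.comp (Filter.tendsto_add_atTop_nat 1)
          exact this
        have h2 : Filter.Tendsto (fun n => dist u (x (n + 1))) Filter.atTop (nhds 0) := by
          simpa [dist_comm] using h1
        have h3 : Filter.Tendsto (fun n => dist u (x n)) Filter.atTop (nhds 0) := by
          simpa [dist_comm] using hxu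
        have h4 : Filter.Tendsto (fun n => d n + dist (x (n + 1)) u + dist u (x n))
            Filter.atTop (nhds 0) := by
          have := (hd_tendsto.add h1).add h3
          simpa using this
        have h5 := h2.add (h4.const_mul lam)
        simpa [ht_def] using h5
      apply ge_of_tendsto ht_tendsto
      filter_upwards [Filter.eventually_atTop.2 ⟨N, fun n hn => hn⟩] with n hn
      have hxnu : x n ≠ u := hN n hn
      have hxn1u : x (n + 1) ≠ u := hN (n + 1) (by omega)
      have hc := hcontr (x n) (x (n + 1)) u (hne' n) hxn1u hxnu.symm
      have hH1 : 0 ≤ Metric.hausdorffDist (F (x n)) (F (x (n + 1))) :=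
        Metric.hausdorffDist_nonneg
      have hH2 : 0 ≤ Metric.hausdorffDist (F (x (n + 1))) (F u) :=
        Metric.hausdorffDist_nonneg
      have hHu : Metric.hausdorffDist (F (x n)) (F u) ≤
          lam * (d n + dist (x (n + 1)) u + dist u (x n)) := by
        rw [Metric.hausdorffDist_comm]
        simp only [hd_def]
        linarith
      have h6 : Metric.infDist u (F u) ≤
          Metric.infDist (x (n + 1)) (F u) + dist u (x (n + 1)) :=
        Metric.infDist_le_infDist_add_dist
      have h7 : Metric.infDist (x (n + 1)) (F u) ≤ Metric.hausdorffDist (F (x n)) (F u) :=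
        Metric.infDist_le_hausdorffDist_of_mem (hmem n) (fin _ _)
      simp only [ht_def]
      linarith
  have : Metric.infDist u (F u) = 0 := le_antisymm hmain hiu
  exact hfix u (((hcl u).mem_iff_infDist_zero (hne u)).2 this)
end
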